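/- For every integer d ≥ 1 and every integer N ≥ 1, there exists a recoloring algorithm A on the vertex set V = {1,…,N} such that for every update sequence G₀, G₁, …, G_m: (i) every coloring produced by A takes values in {1, …, 2·(d + 1)·C}, where C = max_{0 ≤ t ≤ m} χ(G_t); and (ii) at every single step t (1 ≤ t ≤ m), the number of recolorings performed is at most (d + 1)·⌈N^{1/d}⌉. In particular, there is an O(d)-competitive recoloring algorithm performing O(d·N^{1/d}) vertex recolorings per update in the worst case. -/

import Mathlib

/-- `H` is obtained from `G` by inserting or deleting exactly one edge. -/
def isStep {V : Type*} (G H : SimpleGraph V) : Prop :=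
  ∃ u v : V, u ≠ v ∧
    ((¬ G.Adj u v ∧ H = G ⊔ SimpleGraph.fromEdgeSet {s(u, v)}) ∨
     (G.Adj u v ∧ H = G \ SimpleGraph.fromEdgeSet {s(u, v)}))

/-- `f` is a proper (ℕ-valued) coloring of `G`. -/
def IsProperNat {V : Type*} (G : SimpleGraph V) (f : V → ℕ) : Prop :=
  ∀ ⦃u v⦄, G.Adj u v → f u ≠ f v

/-- Number of vertices on which the colorings `f` and `g` differ. -/
def recount {N : ℕ} (f g : Fin N → ℕ) : ℕ :=
  (Finset.univ.filter fun v => f v ≠ g v).card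


/-!
Let `s = ⌈N^{1/d}⌉`, so that `N ≤ s^d`. A step touches the smaller endpoint of the edge it
inserts. The palette is split into `2d` buckets, one for each level `1 ≤ ℓ ≤ d` and parity; every
vertex sits in one bucket, all vertices of a bucket share a time `β` that is at least their last
touch times, and a vertex is colored by its color in a fixed optimal coloring of `G_β`. Two
adjacent vertices of equal color would lie in the same bucket with the same color in `G_β`, so
their edge was inserted after `β` and touched one of them after `β`, which is impossible.

Level `ℓ` works in phases of length `s^(ℓ-1)`: its bucket with the parity of the current phase
has the start of the phase as time, the other one the start of the previous phase. During a phase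
the vertices of level `ℓ` move from the old bucket to the new one, `s` per step, so the old bucket
is empty when its time is renewed. A touched vertex starts at level `1`, whose bucket is renewed
at every step, and climbs to level `ℓ + 1` at the start of the first phase of level `ℓ + 1` after
it reached level `ℓ`. The vertices that move in a given step are therefore those of level `1`
(touched in the last `s` steps), and at each level `ℓ ≥ 2` the vertices whose last touch time lies
in a window of length `s`, plus `s` consecutive indices among the vertices that stayed at the top
level; since distinct vertices have distinct touch times, this is at most `(d + 1) s` vertices.
-/

namespace BigBuckets

noncomputable def optColoring {N : ℕ} (G : SimpleGraph (Fin N)) (v : Fin N) : ℕ :=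
  G.colorable_chromaticNumber_of_fintype.some v

lemma optColoring_ne_of_adj {N : ℕ} (G : SimpleGraph (Fin N)) {u v : Fin N} (h : G.Adj u v) :
    optColoring G u ≠ optColoring G v := fun he =>
  G.colorable_chromaticNumber_of_fintype.some.valid h (Fin.val_injective he)

lemma optColoring_lt {N : ℕ} (G : SimpleGraph (Fin N)) (v : Fin N) :
    optColoring G v < G.chromaticNumber.toNat :=
  (G.colorable_chromaticNumber_of_fintype.some v).isLt

lemma add_le_of_dvd_of_lt {a b c : ℕ} (ha : c ∣ a) (hb : c ∣ b) (h : a < b) :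
    a + c ≤ b := by
  obtain ⟨x, rfl⟩ := ha
  obtain ⟨y, rfl⟩ := hb
  have hxy : x + 1 ≤ y := Nat.lt_of_mul_lt_mul_left h
  calc c * x + c = c * (x + 1) := by ring
    _ ≤ c * y := Nat.mul_le_mul_left _ hxy

def powSum (s : ℕ) : ℕ → ℕ
  | 0 => 0
  | k + 1 => powSum s k + s ^ (k + 1)

lemma powSum_sub_one (s : ℕ) {ℓ : ℕ} (h : 2 ≤ ℓ) :
    powSum s (ℓ - 1) = powSum s (ℓ - 2) + s ^ (ℓ - 1) := by
  obtain ⟨k, rfl⟩ := Nat.exists_eq_add_of_le h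
  simp [show 2 + k - 1 = k + 1 by omega, powSum]

/-- A vertex touched at time `T` enters level `1` at time `T`, and level `j + 1` at the first
multiple of `s ^ j` after the time it entered level `j`. -/
def promotionTime (s : ℕ) : ℕ → ℕ → ℕ
  | 0, T => T
  | 1, T => T
  | j + 2, T => s ^ (j + 1) * (promotionTime s (j + 1) T / s ^ (j + 1) + 1)

/-- Level `ℓ` runs in phases of length `s ^ (ℓ - 1)`. -/
def phaseStart (s ℓ t : ℕ) : ℕ := s ^ (ℓ - 1) * (t / s ^ (ℓ - 1))

section Arithmetic

variable {s ℓ t T : ℕ}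

@[simp] lemma promotionTime_one (s T : ℕ) : promotionTime s 1 T = T := rfl

lemma promotionTime_succ {j : ℕ} (hj : 1 ≤ j) (T : ℕ) :
    promotionTime s (j + 1) T = s ^ j * (promotionTime s j T / s ^ j + 1) := by
  obtain ⟨k, rfl⟩ := Nat.exists_eq_add_of_le' hj
  rfl

lemma promotionTime_lt_succ (hs : 1 ≤ s) {j : ℕ} (hj : 1 ≤ j) (T : ℕ) :
    promotionTime s j T < promotionTime s (j + 1) T := by
  rw [promotionTime_succ hj]
  exact Nat.lt_mul_div_succ _ (Nat.pow_pos hs)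

lemma pow_dvd_promotionTime (hℓ : 1 ≤ ℓ) (T : ℕ) : s ^ (ℓ - 1) ∣ promotionTime s ℓ T := by
  obtain ⟨k, rfl⟩ := Nat.exists_eq_add_of_le' hℓ
  cases k with
  | zero => simp
  | succ k => exact Dvd.intro _ rfl

lemma promotionTime_mono (hs : 1 ≤ s) {j k : ℕ} (hj : 1 ≤ j) (hjk : j ≤ k) (T : ℕ) :
    promotionTime s j T ≤ promotionTime s k T := by
  induction k, hjk using Nat.le_induction with
  | base => rfl
  | succ k hk ih => exact ih.trans (promotionTime_lt_succ hs (hj.trans hk) T).le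

lemma le_promotionTime (hs : 1 ≤ s) (hℓ : 1 ≤ ℓ) (T : ℕ) : T ≤ promotionTime s ℓ T :=
  promotionTime_mono hs le_rfl hℓ T

lemma promotionTime_le (hℓ : 1 ≤ ℓ) (T : ℕ) :
    promotionTime s ℓ T ≤ T + powSum s (ℓ - 1) := by
  induction ℓ, hℓ using Nat.le_induction with
  | base => simp [powSum]
  | succ j hj ih =>
    rw [promotionTime_succ hj, show j + 1 - 1 = (j - 1) + 1 by omega, powSum,
      show j - 1 + 1 = j by omega, Nat.mul_add_one]
    have := Nat.mul_div_le (promotionTime s j T) (s ^ j)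
    omega

/-- Promotion to level `j + 1 ≥ 3` waits at least one phase of level `j`, promotion to level `2`
at least one step. -/
lemma lt_promotionTime (hs : 1 ≤ s) (hℓ : 2 ≤ ℓ) (T : ℕ) :
    T + powSum s (ℓ - 2) < promotionTime s ℓ T := by
  induction ℓ, hℓ using Nat.le_induction with
  | base => simpa [powSum] using promotionTime_lt_succ hs le_rfl T
  | succ j hj ih =>
    have hstep : promotionTime s j T + s ^ (j - 1) ≤ promotionTime s (j + 1) T := by
      refine add_le_of_dvd_of_lt (pow_dvd_promotionTime (by omega) T) ?_
        (promotionTime_lt_succ hs (by omega) T)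
      exact (pow_dvd_pow s (by omega)).trans (pow_dvd_promotionTime (ℓ := j + 1) (by omega) T)
    rw [show j + 1 - 2 = (j - 2) + 1 by omega, powSum, show j - 2 + 1 = j - 1 by omega]
    omega

lemma promotionTime_succ_le_of_dvd {j x : ℕ} (hs : 1 ≤ s) (hj : 1 ≤ j) (hx : s ^ j ∣ x)
    (h : promotionTime s j T < x) : promotionTime s (j + 1) T ≤ x := by
  obtain ⟨k, rfl⟩ := hx
  rw [promotionTime_succ hj]
  refine Nat.mul_le_mul_left _ (Nat.succ_le_of_lt ?_)
  rwa [Nat.div_lt_iff_lt_mul (Nat.pow_pos hs), Nat.mul_comm]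

lemma phaseStart_le (s ℓ t : ℕ) : phaseStart s ℓ t ≤ t := Nat.mul_div_le _ _

lemma lt_phaseStart_add (hs : 1 ≤ s) (ℓ t : ℕ) : t < phaseStart s ℓ t + s ^ (ℓ - 1) := by
  have := Nat.lt_mul_div_succ t (Nat.pow_pos hs : 0 < s ^ (ℓ - 1))
  rw [Nat.mul_add_one] at this
  exact this

lemma pow_dvd_phaseStart (s ℓ t : ℕ) : s ^ (ℓ - 1) ∣ phaseStart s ℓ t := Dvd.intro _ rfl

lemma le_phaseStart_of_dvd (hs : 1 ≤ s) {x : ℕ} (hx : x ≤ t) (hdvd : s ^ (ℓ - 1) ∣ x) :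
    x ≤ phaseStart s ℓ t := by
  obtain ⟨k, rfl⟩ := hdvd
  refine Nat.mul_le_mul_left _ ((Nat.le_div_iff_mul_le (Nat.pow_pos hs)).2 ?_)
  rwa [Nat.mul_comm]

lemma phaseStart_one (t : ℕ) : phaseStart s 1 t = t := by
  simp [phaseStart]

lemma phaseStart_succ_of_dvd (hs : 1 ≤ s) (h : s ^ (ℓ - 1) ∣ t + 1) :
    phaseStart s ℓ (t + 1) = t + 1 ∧ phaseStart s ℓ t + s ^ (ℓ - 1) = t + 1 := by
  refine ⟨Nat.mul_div_cancel' h, ?_⟩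
  have := add_le_of_dvd_of_lt (pow_dvd_phaseStart s ℓ t) h
    (Nat.lt_succ_of_le (phaseStart_le s ℓ t))
  have := lt_phaseStart_add hs ℓ t
  omega

lemma phaseStart_succ_of_not_dvd (h : ¬ s ^ (ℓ - 1) ∣ t + 1) :
    phaseStart s ℓ (t + 1) = phaseStart s ℓ t := by
  simp [phaseStart, Nat.succ_div, h]

end Arithmetic

/-- The level at time `t` of a vertex last touched at time `T`, where `T = 0` encodes a vertex
that was never touched. -/
noncomputable def levelOf (d s t T : ℕ) : ℕ :=
  if 0 < T then Nat.findGreatest (fun ℓ => promotionTime s ℓ T ≤ t) d else d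

def JustPromoted (s ℓ t T : ℕ) : Prop :=
  0 < T ∧ promotionTime s ℓ T = phaseStart s ℓ t

/-- Vertices that were at the top level already during the previous phase migrate in order of
their index, all others in order of their last touch time. -/
def MigratesByIndex (d s ℓ t T : ℕ) : Prop :=
  ℓ = d ∧ ¬ JustPromoted s ℓ t T

open Classical in
/-- Whether a vertex of level `ℓ` with index `i` has moved, by time `t`, to the bucket of the
current phase of level `ℓ`; `s` vertices move per step, and all of them count as moved during the
first phase. -/
def Migrated (d s ℓ t T i : ℕ) : Prop :=
  phaseStart s ℓ t = 0 ∨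
    if MigratesByIndex d s ℓ t T then i < (t - phaseStart s ℓ t + 1) * s
    else phaseStart s ℓ t ≤ T + (t - phaseStart s ℓ t + 1) * s + powSum s (ℓ - 2)

section Level

variable {d s t T ℓ i : ℕ}

lemma levelOf_le (d s t T : ℕ) : levelOf d s t T ≤ d := by
  unfold levelOf
  split
  · exact Nat.findGreatest_le d
  · exact le_rfl

@[simp] lemma levelOf_zero (d s t : ℕ) : levelOf d s t 0 = d := by
  simp [levelOf]

lemma pos_of_levelOf_ne (h : levelOf d s t T ≠ d) : 0 < T := by
  rcases Nat.eq_zero_or_pos T with rfl | h0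
  · exact absurd (levelOf_zero d s t) h
  · exact h0

lemma pos_of_not_migratesByIndex {t' : ℕ} (hL : levelOf d s t' T = ℓ)
    (h : ¬ MigratesByIndex d s ℓ t T) : 0 < T := by
  rcases Nat.eq_zero_or_pos T with rfl | h0
  · exact (h ⟨hL ▸ levelOf_zero d s t', fun hJ => hJ.1.ne' rfl⟩).elim
  · exact h0

lemma one_le_levelOf (hd : 1 ≤ d) (hT : T ≤ t) : 1 ≤ levelOf d s t T := by
  unfold levelOf
  split
  · exact Nat.le_findGreatest hd (by simpa using hT)
  · exact hd

lemma promotionTime_levelOf_le (hd : 1 ≤ d) (h0 : 0 < T) (hT : T ≤ t) :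
    promotionTime s (levelOf d s t T) T ≤ t := by
  rw [levelOf, if_pos h0]
  exact Nat.findGreatest_spec (P := fun ℓ => promotionTime s ℓ T ≤ t) hd (by simpa using hT)

lemma lt_promotionTime_of_levelOf_lt (h0 : 0 < T) {k : ℕ} (hk : levelOf d s t T < k)
    (hkd : k ≤ d) : t < promotionTime s k T := by
  by_contra! hc
  have : k ≤ levelOf d s t T := by
    rw [levelOf, if_pos h0]
    exact Nat.le_findGreatest hkd hc
  omega

lemma levelOf_mono (d s T : ℕ) {t t' : ℕ} (h : t ≤ t') : levelOf d s t T ≤ levelOf d s t' T := by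
  unfold levelOf
  split
  · exact Nat.findGreatest_mono (fun ℓ hℓ => le_trans hℓ h) le_rfl
  · exact le_rfl

lemma levelOf_self (hs : 1 ≤ s) (hd : 1 ≤ d) (ht : 0 < t) : levelOf d s t t = 1 := by
  rw [levelOf, if_pos ht, Nat.findGreatest_eq_iff]
  refine ⟨hd, fun _ => by simp, fun n h1 _ hc => ?_⟩
  have := lt_promotionTime hs (show 2 ≤ n by omega) t
  omega

lemma levelOf_succ (hs : 1 ≤ s) (hd : 1 ≤ d) (h0 : 0 < T) (hT : T ≤ t) :
    levelOf d s (t + 1) T = levelOf d s t T ∨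
      (levelOf d s (t + 1) T = levelOf d s t T + 1 ∧
        promotionTime s (levelOf d s (t + 1) T) T = t + 1) := by
  set L := levelOf d s t T
  set L' := levelOf d s (t + 1) T
  rcases (levelOf_mono d s T (Nat.le_succ t) : L ≤ L').eq_or_lt with h | h
  · exact Or.inl h.symm
  right
  have hL'd : L' ≤ d := levelOf_le d s (t + 1) T
  have h1 : promotionTime s L' T ≤ t + 1 := promotionTime_levelOf_le hd h0 (by omega)
  have h2 : t < promotionTime s L' T := lt_promotionTime_of_levelOf_lt h0 h hL'd
  have h3 : L' ≤ L + 1 := by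
    by_contra! hc
    have h4 : promotionTime s (L + 1) T < promotionTime s L' T :=
      (promotionTime_lt_succ hs (by omega) T).trans_le (promotionTime_mono hs (by omega) hc T)
    have h5 : t < promotionTime s (L + 1) T :=
      lt_promotionTime_of_levelOf_lt (d := d) h0 (by omega) (by omega)
    omega
  exact ⟨by omega, by omega⟩

lemma phaseStart_succ_le_promotionTime (hs : 1 ≤ s) (h0 : 0 < T) (hL : levelOf d s t T = ℓ)
    (hℓ1 : 1 ≤ ℓ) (hℓd : ℓ < d) : phaseStart s (ℓ + 1) t ≤ promotionTime s ℓ T := by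
  by_contra! hc
  have h1 := promotionTime_succ_le_of_dvd hs hℓ1 (pow_dvd_phaseStart s (ℓ + 1) t) hc
  have h2 := lt_promotionTime_of_levelOf_lt (t := t) h0 (by omega : levelOf d s t T < ℓ + 1) hℓd
  have h3 := phaseStart_le s (ℓ + 1) t
  omega

end Level

section Schedule

variable {d s t T ℓ i : ℕ}

lemma migrated_of_levelOf_eq_one (hs : 1 ≤ s) (hi : i < s ^ d) (hL : levelOf d s t T = 1) :
    Migrated d s 1 t T i := by
  unfold Migrated
  rw [phaseStart_one]
  rcases Nat.eq_zero_or_pos t with rfl | ht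
  · exact Or.inl rfl
  right
  simp only [Nat.sub_self, Nat.zero_add, Nat.one_mul, show 1 - 2 = 0 from rfl, powSum, add_zero]
  split_ifs with htop
  · rwa [← htop.1, pow_one] at hi
  · rcases Nat.lt_or_ge 1 d with hd | hd
    · have h0 : 0 < T := pos_of_levelOf_ne (d := d) (t := t) (s := s) (by omega)
      have h1 := lt_promotionTime_of_levelOf_lt (t := t) h0 (by omega : levelOf d s t T < 2) hd
      have h2 := promotionTime_le (s := s) (ℓ := 2) (by omega) T
      simp only [powSum, zero_add, pow_one] at h2
      omega
    · have hJ : JustPromoted s 1 t T := by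
        by_contra hJ
        have := levelOf_le d s t T
        exact htop ⟨by omega, hJ⟩
      have := hJ.2
      rw [promotionTime_one, phaseStart_one] at this
      omega

/-- The previous bucket of a level is empty at the last step of each phase. -/
lemma migrated_of_dvd (hs : 1 ≤ s) (hd : 1 ≤ d) (hi : i < s ^ d) (hT : T ≤ t)
    (hL : levelOf d s t T = ℓ) (hend : s ^ (ℓ - 1) ∣ t + 1) : Migrated d s ℓ t T i := by
  have hℓ1 : 1 ≤ ℓ := hL ▸ one_le_levelOf hd hT
  have hℓd : ℓ ≤ d := hL ▸ levelOf_le d s t T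
  obtain rfl | hℓ2 : ℓ = 1 ∨ 2 ≤ ℓ := by omega
  · exact migrated_of_levelOf_eq_one hs hi hL
  have hgs := powSum_sub_one s hℓ2
  have hE := promotionTime_le (s := s) hℓ1 T
  have hbP := (phaseStart_succ_of_dvd hs hend).2
  have hP : 0 < s ^ (ℓ - 1) := Nat.pow_pos hs
  have hPs : s ^ (ℓ - 1) * s = s ^ ℓ := by rw [← pow_succ]; congr 1; omega
  unfold Migrated
  right
  rw [show t - phaseStart s ℓ t + 1 = s ^ (ℓ - 1) by omega, hPs]
  split_ifs with htop
  · rwa [htop.1]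
  by_cases hJ : JustPromoted s ℓ t T
  · have := hJ.2
    have : s ^ (ℓ - 1) ≤ s ^ ℓ := Nat.pow_le_pow_right hs (by omega)
    omega
  · have hℓd' : ℓ < d := lt_of_le_of_ne hℓd fun h => htop ⟨h, hJ⟩
    have h0 : 0 < T := pos_of_levelOf_ne (d := d) (t := t) (s := s) (by omega)
    have hB := phaseStart_succ_le_promotionTime hs h0 hL hℓ1 hℓd'
    have hbB : phaseStart s ℓ t + s ^ (ℓ - 1) ≤ phaseStart s (ℓ + 1) t + s ^ ℓ := by
      refine add_le_of_dvd_of_lt (pow_dvd_phaseStart s ℓ t) (Nat.dvd_add ?_ ?_) ?_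
      · exact (pow_dvd_pow s (by omega)).trans (pow_dvd_phaseStart s (ℓ + 1) t)
      · exact pow_dvd_pow s (by omega)
      · have := lt_phaseStart_add hs (ℓ + 1) t
        simp only [Nat.add_sub_cancel] at this
        omega
    omega

lemma two_le_of_not_migrated (hs : 1 ≤ s) (hd : 1 ≤ d) (hi : i < s ^ d) (hT : T ≤ t)
    (hL : levelOf d s t T = ℓ) (hnm : ¬ Migrated d s ℓ t T i) : 2 ≤ ℓ := by
  have hℓ1 : 1 ≤ ℓ := hL ▸ one_le_levelOf hd hT
  by_contra! hc
  obtain rfl : ℓ = 1 := by omega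
  exact hnm (migrated_of_levelOf_eq_one hs hi hL)

/-- A just promoted vertex that has not migrated yet is still within the first phase of the
level below that started with its promotion. -/
lemma lt_of_justPromoted_of_not_migrated (hs : 1 ≤ s) (h2 : 2 ≤ ℓ)
    (hJ : JustPromoted s ℓ t T) (hnm : ¬ Migrated d s ℓ t T i) :
    t - phaseStart s ℓ t + 1 < s ^ (ℓ - 2) ∧ phaseStart s (ℓ - 1) t = phaseStart s ℓ t := by
  unfold Migrated at hnm
  push Not at hnm
  obtain ⟨-, hnm⟩ := hnm
  rw [if_neg fun h => h.2 hJ] at hnm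
  set b := phaseStart s ℓ t
  have hE := promotionTime_le (s := s) (by omega : 1 ≤ ℓ) T
  rw [hJ.2, powSum_sub_one s h2] at hE
  have hP : s ^ (ℓ - 1) = s ^ (ℓ - 2) * s := by rw [← pow_succ]; congr 1; omega
  have hfirst : t - b + 1 < s ^ (ℓ - 2) :=
    Nat.lt_of_mul_lt_mul_right (a := s) (by omega)
  refine ⟨hfirst, ?_⟩
  have hdvd : s ^ (ℓ - 1 - 1) ∣ b := by
    rw [show ℓ - 1 - 1 = ℓ - 2 by omega]
    exact (pow_dvd_pow s (by omega)).trans (pow_dvd_phaseStart s ℓ t)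
  have h1 : b ≤ phaseStart s (ℓ - 1) t := le_phaseStart_of_dvd hs (phaseStart_le s ℓ t) hdvd
  by_contra hne
  have h2 := add_le_of_dvd_of_lt hdvd (pow_dvd_phaseStart s (ℓ - 1) t) (h1.lt_of_ne' hne)
  have h3 := phaseStart_le s (ℓ - 1) t
  rw [show ℓ - 1 - 1 = ℓ - 2 by omega] at h2
  omega

end Schedule

/-- Colors are grouped into `2 d` buckets, one for each level `1 ≤ ℓ ≤ d` and parity. All
vertices of a bucket are colored by an optimal coloring of the graph at the same time `time`. -/
structure Bucket where
  level : ℕ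
  parity : ℕ
  time : ℕ

/-- The bucket of level `ℓ` with the parity of the current phase uses the start of this phase as
its time, the other one the start of the previous phase. -/
def bucketTime (s ℓ p t : ℕ) : ℕ :=
  if t / s ^ (ℓ - 1) % 2 = p then phaseStart s ℓ t else phaseStart s ℓ t - s ^ (ℓ - 1)

open Classical in
/-- The bucket at time `t` of a vertex of level `ℓ` with last touch `T` and index `i`. Before
migrating it stays in the previous bucket of its level, or, if it was promoted at the start of
the current phase, in the previous bucket of the level below. -/
noncomputable def bucket (d s ℓ t T i : ℕ) : Bucket :=
  if Migrated d s ℓ t T i then ⟨ℓ, t / s ^ (ℓ - 1) % 2, phaseStart s ℓ t⟩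
  else if JustPromoted s ℓ t T then
    ⟨ℓ - 1, (phaseStart s ℓ t / s ^ (ℓ - 2) + 1) % 2, phaseStart s ℓ t - s ^ (ℓ - 2)⟩
  else ⟨ℓ, (t / s ^ (ℓ - 1) + 1) % 2, phaseStart s ℓ t - s ^ (ℓ - 1)⟩

section Bucket

variable {d s t T ℓ i : ℕ}

lemma bucket_level_mem (hs : 1 ≤ s) (hd : 1 ≤ d) (hi : i < s ^ d) (hT : T ≤ t)
    (hL : levelOf d s t T = ℓ) :
    1 ≤ (bucket d s ℓ t T i).level ∧ (bucket d s ℓ t T i).level ≤ d := by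
  have h1 : 1 ≤ ℓ := hL ▸ one_le_levelOf hd hT
  have h2 : ℓ ≤ d := hL ▸ levelOf_le d s t T
  unfold bucket
  split_ifs with hm
  · exact ⟨h1, h2⟩
  · have := two_le_of_not_migrated hs hd hi hT hL hm
    constructor <;> dsimp only <;> omega
  · exact ⟨h1, h2⟩

lemma bucket_parity_lt : (bucket d s ℓ t T i).parity < 2 := by
  unfold bucket
  split_ifs <;> exact Nat.mod_lt _ two_pos

lemma bucket_time_le : (bucket d s ℓ t T i).time ≤ t := by
  have := phaseStart_le s ℓ t
  unfold bucket
  split_ifs <;> dsimp only <;> omega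

lemma le_bucket_time (hs : 1 ≤ s) (hd : 1 ≤ d) (hi : i < s ^ d) (hT : T ≤ t)
    (hL : levelOf d s t T = ℓ) (h0 : 0 < T) : T ≤ (bucket d s ℓ t T i).time := by
  have h1 : 1 ≤ ℓ := hL ▸ one_le_levelOf hd hT
  have hE : promotionTime s ℓ T ≤ t := hL ▸ promotionTime_levelOf_le hd h0 hT
  have hEb : promotionTime s ℓ T ≤ phaseStart s ℓ t :=
    le_phaseStart_of_dvd hs hE (pow_dvd_promotionTime h1 T)
  have hTE : T ≤ promotionTime s ℓ T := le_promotionTime hs h1 T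
  unfold bucket
  split_ifs with hm hJ
  · exact hTE.trans hEb
  · have hℓ2 := two_le_of_not_migrated hs hd hi hT hL hm
    have hprev := promotionTime_lt_succ hs (j := ℓ - 1) (by omega) T
    have hdvd := pow_dvd_promotionTime (s := s) (ℓ := ℓ - 1) (by omega) T
    rw [show ℓ - 1 + 1 = ℓ by omega, hJ.2] at hprev
    rw [show ℓ - 1 - 1 = ℓ - 2 by omega] at hdvd
    have hle := add_le_of_dvd_of_lt hdvd
      ((pow_dvd_pow s (by omega)).trans (pow_dvd_phaseStart s ℓ t)) hprev
    have := le_promotionTime hs (ℓ := ℓ - 1) (by omega) T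
    dsimp only
    omega
  · have hℓ2 := two_le_of_not_migrated hs hd hi hT hL hm
    have hle := add_le_of_dvd_of_lt (pow_dvd_promotionTime h1 T) (pow_dvd_phaseStart s ℓ t)
      (lt_of_le_of_ne hEb fun h => hJ ⟨h0, h⟩)
    dsimp only
    omega

/-- The time of a bucket is determined by its level, its parity and the current time; this is
what makes vertices of equal color share a time. -/
lemma bucket_time_eq (hs : 1 ≤ s) (hd : 1 ≤ d) (hi : i < s ^ d) (hT : T ≤ t)
    (hL : levelOf d s t T = ℓ) :
    (bucket d s ℓ t T i).time =
      bucketTime s (bucket d s ℓ t T i).level (bucket d s ℓ t T i).parity t := by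
  have hne (q : ℕ) : q % 2 ≠ (q + 1) % 2 := by omega
  unfold bucket
  split_ifs with hm hJ
  · simp [bucketTime]
  · have hℓ2 := two_le_of_not_migrated hs hd hi hT hL hm
    obtain ⟨-, hb⟩ := lt_of_justPromoted_of_not_migrated hs hℓ2 hJ hm
    have hq : t / s ^ (ℓ - 2) = phaseStart s ℓ t / s ^ (ℓ - 2) := by
      rw [phaseStart, show ℓ - 1 - 1 = ℓ - 2 by omega] at hb
      rw [← hb, Nat.mul_div_cancel_left _ (Nat.pow_pos hs)]
    simp only [bucketTime, show ℓ - 1 - 1 = ℓ - 2 by omega, hq, if_neg (hne _), hb]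
  · simp only [bucketTime, if_neg (hne _)]

end Bucket

def colorCode (d : ℕ) (b : Bucket) (c : ℕ) : ℕ := 2 * d * c + 2 * (b.level - 1) + b.parity + 1

lemma colorCode_inj {d c c' : ℕ} {b b' : Bucket} (hb : 1 ≤ b.level ∧ b.level ≤ d)
    (hb' : 1 ≤ b'.level ∧ b'.level ≤ d) (hp : b.parity < 2) (hp' : b'.parity < 2)
    (h : colorCode d b c = colorCode d b' c') :
    b.level = b'.level ∧ b.parity = b'.parity ∧ c = c' := by
  unfold colorCode at h
  have hc : c = c' := by
    rcases lt_trichotomy c c' with hlt | heq | hlt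
    · have := Nat.mul_le_mul_left (2 * d) (Nat.succ_le_of_lt hlt)
      rw [Nat.mul_succ] at this
      omega
    · exact heq
    · have := Nat.mul_le_mul_left (2 * d) (Nat.succ_le_of_lt hlt)
      rw [Nat.mul_succ] at this
      omega
  subst hc
  omega

/-- Last touch times `T` of the vertices of level `ℓ` that migrate by age at step `t + 1`. -/
def InAgeWindow (s ℓ t T : ℕ) : Prop :=
  0 < T ∧
    T + (t + 1 - phaseStart s ℓ (t + 1)) * s + powSum s (ℓ - 2) < phaseStart s ℓ (t + 1) ∧
    phaseStart s ℓ (t + 1) ≤ T + (t + 1 - phaseStart s ℓ (t + 1) + 1) * s + powSum s (ℓ - 2)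

/-- Indices `i` of the vertices of the top level `d` that migrate by index at step `t + 1`. -/
def InIndexWindow (s d t i : ℕ) : Prop :=
  (t + 1 - phaseStart s d (t + 1)) * s ≤ i ∧ i < (t + 1 - phaseStart s d (t + 1) + 1) * s

instance (s ℓ t T : ℕ) : Decidable (InAgeWindow s ℓ t T) := by
  unfold InAgeWindow
  infer_instance

instance (s d t i : ℕ) : Decidable (InIndexWindow s d t i) := by
  unfold InIndexWindow
  infer_instance

section Stability

variable {d s t T ℓ i : ℕ}

lemma not_migrated_succ_of_phaseStart_eq (hb : phaseStart s ℓ (t + 1) = t + 1)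
    (hL : levelOf d s (t + 1) T = ℓ) (hage : 0 < T → T + powSum s (ℓ - 2) < t + 1)
    (hXT : ¬ InAgeWindow s ℓ t T) (hXV : ¬ InIndexWindow s d t i) :
    ¬ Migrated d s ℓ (t + 1) T i := by
  unfold Migrated
  rw [hb, Nat.sub_self, Nat.zero_add, Nat.one_mul]
  rintro (h | h)
  · omega
  split_ifs at h with htop
  · exact hXV ⟨by simp [← htop.1, hb], by simpa [← htop.1, hb] using h⟩
  · have h0 : 0 < T := pos_of_not_migratesByIndex hL htop
    exact hXT ⟨h0, by simpa [hb] using hage h0, by simpa [hb] using h⟩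

lemma migrated_succ_iff_of_not_dvd (hdvd : ¬ s ^ (ℓ - 1) ∣ t + 1)
    (hL : levelOf d s (t + 1) T = ℓ) (hXT : ¬ InAgeWindow s ℓ t T) (hXV : ¬ InIndexWindow s d t i) :
    Migrated d s ℓ (t + 1) T i ↔ Migrated d s ℓ t T i := by
  have hb := phaseStart_succ_of_not_dvd hdvd
  have hJ : JustPromoted s ℓ (t + 1) T ↔ JustPromoted s ℓ t T := by
    rw [JustPromoted, JustPromoted, hb]
  have hI : MigratesByIndex d s ℓ (t + 1) T ↔ MigratesByIndex d s ℓ t T := by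
    rw [MigratesByIndex, MigratesByIndex, hJ]
  have hoff : t + 1 - phaseStart s ℓ t = t - phaseStart s ℓ t + 1 := by
    have := phaseStart_le s ℓ t
    omega
  have hmono : (t - phaseStart s ℓ t + 1) * s ≤ (t - phaseStart s ℓ t + 1 + 1) * s :=
    Nat.mul_le_mul_right s (Nat.le_succ _)
  unfold Migrated
  rw [hb, hoff, hI]
  refine or_congr_right ⟨fun h => ?_, fun h => ?_⟩
  · split_ifs at h ⊢ with htop
    · by_contra! h'
      refine hXV ⟨?_, ?_⟩ <;> rw [← htop.1, hb, hoff] <;> omega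
    · by_contra! h'
      refine hXT ⟨pos_of_not_migratesByIndex hL (mt hI.1 htop), ?_, ?_⟩ <;>
        rw [hb, hoff] <;> omega
  · split_ifs at h ⊢ <;> omega

lemma bucket_succ_of_levelOf_eq (hs : 1 ≤ s) (hd : 1 ≤ d) (hi : i < s ^ d) (hT : T ≤ t)
    (hℓ : 2 ≤ ℓ) (hL : levelOf d s t T = ℓ) (hL' : levelOf d s (t + 1) T = ℓ)
    (hXT : ¬ InAgeWindow s ℓ t T) (hXV : ¬ InIndexWindow s d t i) :
    bucket d s ℓ (t + 1) T i = bucket d s ℓ t T i := by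
  by_cases hdvd : s ^ (ℓ - 1) ∣ t + 1
  · obtain ⟨hb', hbP⟩ := phaseStart_succ_of_dvd hs hdvd
    have hE (h0 : 0 < T) : promotionTime s ℓ T ≤ t := hL ▸ promotionTime_levelOf_le hd h0 hT
    have hm' : ¬ Migrated d s ℓ (t + 1) T i := by
      refine not_migrated_succ_of_phaseStart_eq hb' hL' (fun h0 => ?_) hXT hXV
      have := lt_promotionTime hs hℓ T
      have := hE h0
      omega
    have hJ' : ¬ JustPromoted s ℓ (t + 1) T := fun hJ => by
      have := hE hJ.1
      have := hJ.2
      omega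
    simp only [bucket, if_pos (migrated_of_dvd hs hd hi hT hL hdvd), if_neg hm', if_neg hJ', hb',
      Nat.succ_div_of_dvd hdvd, Bucket.mk.injEq, true_and]
    omega
  · have hb := phaseStart_succ_of_not_dvd hdvd
    have hJ : JustPromoted s ℓ (t + 1) T ↔ JustPromoted s ℓ t T := by
      rw [JustPromoted, JustPromoted, hb]
    unfold bucket
    rw [migrated_succ_iff_of_not_dvd hdvd hL' hXT hXV, hJ, hb, Nat.succ_div_of_not_dvd hdvd]

/-- When a vertex is promoted from level `ℓ` to `ℓ + 1`, it has migrated to the current bucket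
of level `ℓ`, which becomes the previous bucket of level `ℓ` at the promotion time. -/
lemma bucket_succ_of_promotion (hs : 1 ≤ s) (hd : 1 ≤ d) (hi : i < s ^ d) (hT : T ≤ t)
    (h0 : 0 < T) (hL : levelOf d s t T = ℓ) (hL' : levelOf d s (t + 1) T = ℓ + 1)
    (hP : promotionTime s (ℓ + 1) T = t + 1)
    (hXT : ¬ InAgeWindow s (ℓ + 1) t T) (hXV : ¬ InIndexWindow s d t i) :
    bucket d s (ℓ + 1) (t + 1) T i = bucket d s ℓ t T i := by
  have hℓ : 1 ≤ ℓ := hL ▸ one_le_levelOf hd hT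
  have hdvd' : s ^ ℓ ∣ t + 1 := by
    simpa [hP] using pow_dvd_promotionTime (s := s) (ℓ := ℓ + 1) (by omega) T
  have hb' := (phaseStart_succ_of_dvd (ℓ := ℓ + 1) hs (by simpa using hdvd')).1
  have hJ' : JustPromoted s (ℓ + 1) (t + 1) T := ⟨h0, hP.trans hb'.symm⟩
  have hm' : ¬ Migrated d s (ℓ + 1) (t + 1) T i := by
    refine not_migrated_succ_of_phaseStart_eq hb' hL' (fun _ => ?_) hXT hXV
    simpa [hP] using lt_promotionTime (ℓ := ℓ + 1) hs (by omega) T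
  have hdvd : s ^ (ℓ - 1) ∣ t + 1 := (pow_dvd_pow s (Nat.sub_le ℓ 1)).trans hdvd'
  have hbP := (phaseStart_succ_of_dvd hs hdvd).2
  simp only [bucket, if_pos (migrated_of_dvd hs hd hi hT hL hdvd), if_neg hm', if_pos hJ', hb',
    Nat.add_sub_cancel, show ℓ + 1 - 2 = ℓ - 1 by omega, Nat.succ_div_of_dvd hdvd,
    Bucket.mk.injEq, true_and]
  omega

lemma bucket_succ_eq (hs : 1 ≤ s) (hd : 1 ≤ d) (hi : i < s ^ d) (hT : T ≤ t)
    (hL1 : levelOf d s (t + 1) T ≠ 1) (hXT : ¬ InAgeWindow s (levelOf d s (t + 1) T) t T)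
    (hXV : ¬ InIndexWindow s d t i) :
    bucket d s (levelOf d s (t + 1) T) (t + 1) T i = bucket d s (levelOf d s t T) t T i := by
  have h1 := one_le_levelOf (s := s) hd (show T ≤ t + 1 by omega)
  rcases Nat.eq_zero_or_pos T with rfl | h0
  · simp only [levelOf_zero] at hL1 hXT ⊢
    exact bucket_succ_of_levelOf_eq hs hd hi hT (by omega) (levelOf_zero d s t)
      (levelOf_zero d s (t + 1)) hXT hXV
  rcases levelOf_succ hs hd h0 hT with h | ⟨h, hP⟩
  · rw [h] at hL1 hXT ⊢
    exact bucket_succ_of_levelOf_eq hs hd hi hT (by omega) rfl h hXT hXV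
  · rw [h] at hXT hP ⊢
    exact bucket_succ_of_promotion hs hd hi hT h0 rfl h hP hXT hXV

end Stability

lemma exists_not_and_succ {p : ℕ → Prop} {β t : ℕ} (hβ : β ≤ t) (hpβ : ¬ p β) (hpt : p t) :
    ∃ σ, β ≤ σ ∧ σ < t ∧ ¬ p σ ∧ p (σ + 1) := by
  induction t, hβ using Nat.le_induction with
  | base => exact absurd hpt hpβ
  | succ t hβt ih =>
    by_cases hp : p t
    · obtain ⟨σ, h1, h2, h3, h4⟩ := ih hp
      exact ⟨σ, h1, by omega, h3, h4⟩
    · exact ⟨t, hβt, by omega, hp, hpt⟩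

section Touch

variable {N : ℕ} (F : ℕ → SimpleGraph (Fin N))

def GainsEdge (τ : ℕ) (v : Fin N) : Prop :=
  ∃ w, (F τ).Adj v w ∧ ¬ (F (τ - 1)).Adj v w

/-- A step touches the smaller endpoint of the edge it inserts, so at most one vertex per step. -/
def IsTouched (τ : ℕ) (v : Fin N) : Prop :=
  GainsEdge F τ v ∧ ∀ w, GainsEdge F τ w → v ≤ w

open Classical in
/-- The last time in `[1, t]` at which `v` was touched, or `0` if there is none. -/
noncomputable def lastTouch (t : ℕ) (v : Fin N) : ℕ :=
  Nat.findGreatest (fun τ => IsTouched F τ v) t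

variable {F} {t τ σ : ℕ} {u v : Fin N}

lemma lastTouch_le (F : ℕ → SimpleGraph (Fin N)) (t : ℕ) (v : Fin N) : lastTouch F t v ≤ t := by
  classical
  exact Nat.findGreatest_le t

lemma le_lastTouch (h : IsTouched F τ v) (hτ : τ ≤ t) : τ ≤ lastTouch F t v := by
  classical
  exact Nat.le_findGreatest hτ h

lemma isTouched_lastTouch (h : 0 < lastTouch F t v) : IsTouched F (lastTouch F t v) v := by
  classical
  exact Nat.findGreatest_of_ne_zero rfl h.ne'

lemma IsTouched.unique (hu : IsTouched F τ u) (hv : IsTouched F τ v) : u = v :=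
  le_antisymm (hu.2 v hv.1) (hv.2 u hu.1)

lemma lastTouch_inj (hu : 0 < lastTouch F t u) (h : lastTouch F t u = lastTouch F t v) : u = v :=
  (isTouched_lastTouch hu).unique (h ▸ isTouched_lastTouch (h ▸ hu))

lemma lastTouch_succ_of_isTouched (h : IsTouched F (t + 1) v) :
    lastTouch F (t + 1) v = t + 1 := by
  classical
  rw [lastTouch, Nat.findGreatest_succ, if_pos h]

lemma lastTouch_succ_of_not_isTouched (h : ¬ IsTouched F (t + 1) v) :
    lastTouch F (t + 1) v = lastTouch F t v := by
  classical
  rw [lastTouch, Nat.findGreatest_succ, if_neg h]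
  rfl

lemma gainsEdge_succ_iff (hstep : isStep (F σ) (F (σ + 1))) (hadj : (F (σ + 1)).Adj u v)
    (hn : ¬ (F σ).Adj u v) (w : Fin N) : GainsEdge F (σ + 1) w ↔ w = u ∨ w = v := by
  obtain ⟨a, b, -, ⟨-, hF⟩ | ⟨-, hF⟩⟩ := hstep
  swap
  · rw [hF] at hadj
    exact absurd hadj.1 hn
  have hnew (x y : Fin N) (hxy : (F (σ + 1)).Adj x y) (hn' : ¬ (F σ).Adj x y) :
      s(x, y) = s(a, b) := by
    rw [hF] at hxy
    rcases hxy with h | h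
    · exact absurd h hn'
    · exact h.1
  simp only [GainsEdge, Nat.add_sub_cancel]
  constructor
  · rintro ⟨x, hx, hx'⟩
    have : w ∈ s(u, v) := by
      rw [hnew u v hadj hn, ← hnew w x hx hx']
      exact Sym2.mem_mk_left w x
    exact Sym2.mem_iff.mp this
  · rintro (rfl | rfl)
    · exact ⟨v, hadj, hn⟩
    · exact ⟨u, hadj.symm, fun h => hn h.symm⟩

lemma exists_isTouched_of_adj (hstep : isStep (F σ) (F (σ + 1))) (hadj : (F (σ + 1)).Adj u v)
    (hn : ¬ (F σ).Adj u v) : ∃ w, IsTouched F (σ + 1) w ∧ (w = u ∨ w = v) := by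
  have hiff := gainsEdge_succ_iff hstep hadj hn
  refine ⟨min u v, ⟨(hiff _).2 (min_choice u v), fun w hw => ?_⟩, min_choice u v⟩
  rcases (hiff w).1 hw with rfl | rfl
  · exact min_le_left _ _
  · exact min_le_right _ _

end Touch

section Coloring

variable {N : ℕ}

noncomputable def vertexBucket (d s : ℕ) (F : ℕ → SimpleGraph (Fin N)) (t : ℕ) (v : Fin N) :
    Bucket :=
  bucket d s (levelOf d s t (lastTouch F t v)) t (lastTouch F t v) v

noncomputable def bigBucketColoring (d s : ℕ) (F : ℕ → SimpleGraph (Fin N)) (t : ℕ)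
    (v : Fin N) : ℕ :=
  colorCode d (vertexBucket d s F t v) (optColoring (F (vertexBucket d s F t v).time) v)

variable {d s : ℕ} {F : ℕ → SimpleGraph (Fin N)} {t : ℕ}

lemma vertexBucket_level_mem (hs : 1 ≤ s) (hd : 1 ≤ d) (hNs : N ≤ s ^ d) (v : Fin N) :
    1 ≤ (vertexBucket d s F t v).level ∧ (vertexBucket d s F t v).level ≤ d :=
  bucket_level_mem hs hd (v.isLt.trans_le hNs) (lastTouch_le F t v) rfl

lemma le_vertexBucket_time (hs : 1 ≤ s) (hd : 1 ≤ d) (hNs : N ≤ s ^ d) {v : Fin N} :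
    lastTouch F t v ≤ (vertexBucket d s F t v).time := by
  rcases Nat.eq_zero_or_pos (lastTouch F t v) with h0 | h0
  · exact h0 ▸ Nat.zero_le _
  · exact le_bucket_time hs hd (v.isLt.trans_le hNs) (lastTouch_le F t v) rfl h0

lemma vertexBucket_time_eq (hs : 1 ≤ s) (hd : 1 ≤ d) (hNs : N ≤ s ^ d) (v : Fin N) :
    (vertexBucket d s F t v).time =
      bucketTime s (vertexBucket d s F t v).level (vertexBucket d s F t v).parity t :=
  bucket_time_eq hs hd (v.isLt.trans_le hNs) (lastTouch_le F t v) rfl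

theorem bigBucketColoring_isProper (hs : 1 ≤ s) (hd : 1 ≤ d) (hNs : N ≤ s ^ d)
    (hsteps : ∀ τ < t, isStep (F τ) (F (τ + 1))) :
    IsProperNat (F t) (bigBucketColoring d s F t) := by
  intro u v hadj heq
  obtain ⟨hlevel, hparity, hc⟩ := colorCode_inj (vertexBucket_level_mem hs hd hNs u)
    (vertexBucket_level_mem hs hd hNs v) bucket_parity_lt bucket_parity_lt heq
  have hβ : (vertexBucket d s F t u).time = (vertexBucket d s F t v).time := by
    rw [vertexBucket_time_eq hs hd hNs, vertexBucket_time_eq hs hd hNs v, hlevel, hparity]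
  rw [hβ] at hc
  by_cases hadjβ : (F (vertexBucket d s F t v).time).Adj u v
  · exact optColoring_ne_of_adj _ hadjβ hc
  obtain ⟨σ, hβσ, hσt, hn, hadj'⟩ :=
    exists_not_and_succ (p := fun τ => (F τ).Adj u v) (β := (vertexBucket d s F t v).time)
      bucket_time_le hadjβ hadj
  obtain ⟨w, hw, hwuv⟩ := exists_isTouched_of_adj (hsteps σ hσt) hadj' hn
  have hwβ : (vertexBucket d s F t w).time = (vertexBucket d s F t v).time := by
    rcases hwuv with rfl | rfl
    exacts [hβ, rfl]
  have := le_lastTouch hw hσt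
  have := le_vertexBucket_time (F := F) (t := t) hs hd hNs (v := w)
  omega

lemma one_le_bigBucketColoring (v : Fin N) : 1 ≤ bigBucketColoring d s F t v :=
  Nat.le_add_left 1 _

lemma bigBucketColoring_le (hs : 1 ≤ s) (hd : 1 ≤ d) (hNs : N ≤ s ^ d) (v : Fin N) {C : ℕ}
    (hC : ∀ τ ≤ t, (F τ).chromaticNumber.toNat ≤ C) :
    bigBucketColoring d s F t v ≤ 2 * d * C := by
  have hl := vertexBucket_level_mem (F := F) (t := t) hs hd hNs v
  have hp : (vertexBucket d s F t v).parity < 2 := bucket_parity_lt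
  have hc := (optColoring_lt (F (vertexBucket d s F t v).time) v).trans_le (hC _ bucket_time_le)
  have := Nat.mul_le_mul_left (2 * d) (Nat.succ_le_of_lt hc)
  rw [Nat.mul_succ] at this
  unfold bigBucketColoring colorCode
  omega

lemma isTouched_congr {F' : ℕ → SimpleGraph (Fin N)} {τ : ℕ} (h : ∀ τ ≤ t, F τ = F' τ)
    (hτ : τ ≤ t) (v : Fin N) : IsTouched F τ v ↔ IsTouched F' τ v := by
  simp only [IsTouched, GainsEdge, h τ hτ, h (τ - 1) (by omega)]

lemma lastTouch_le_of_eqOn {F' : ℕ → SimpleGraph (Fin N)} (h : ∀ τ ≤ t, F τ = F' τ)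
    (v : Fin N) : lastTouch F t v ≤ lastTouch F' t v := by
  rcases Nat.eq_zero_or_pos (lastTouch F t v) with h0 | h0
  · omega
  · exact le_lastTouch ((isTouched_congr h (lastTouch_le F t v) v).1 (isTouched_lastTouch h0))
      (lastTouch_le F t v)

lemma bigBucketColoring_congr {F' : ℕ → SimpleGraph (Fin N)} (h : ∀ τ ≤ t, F τ = F' τ) :
    bigBucketColoring d s F t = bigBucketColoring d s F' t := by
  funext v
  have hT : lastTouch F t v = lastTouch F' t v :=
    (lastTouch_le_of_eqOn h v).antisymm (lastTouch_le_of_eqOn (fun τ hτ => (h τ hτ).symm) v)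
  unfold bigBucketColoring vertexBucket
  rw [hT, h _ bucket_time_le]

end Coloring

lemma card_le_of_injOn_Ico {α : Type*} {S : Finset α} {f : α → ℕ} {lo hi : ℕ}
    (hf : ∀ x ∈ S, f x ∈ Finset.Ico lo hi) (hinj : Set.InjOn f S) : S.card ≤ hi - lo := by
  simpa using Finset.card_le_card_of_injOn f hf hinj

section Recount

open Finset

variable {N d s : ℕ} {F : ℕ → SimpleGraph (Fin N)} {t : ℕ}

/-- Distinct vertices of level `1` have distinct touch times among the last `s` steps. -/
lemma card_levelOf_eq_one_le (hs : 1 ≤ s) (hd : 1 ≤ d) (hNs : N ≤ s ^ d) :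
    (univ.filter fun v : Fin N => levelOf d s (t + 1) (lastTouch F (t + 1) v) = 1).card ≤ s := by
  rcases Nat.lt_or_ge d 2 with hd2 | hd2
  · obtain rfl : d = 1 := by omega
    exact (card_filter_le _ _).trans (by simpa using hNs)
  have h0 {v : Fin N} (hv : levelOf d s (t + 1) (lastTouch F (t + 1) v) = 1) :
      0 < lastTouch F (t + 1) v :=
    pos_of_levelOf_ne (d := d) (s := s) (t := t + 1) (by omega)
  refine (card_le_of_injOn_Ico (lo := t + 2 - s) (hi := t + 2) (fun v hv => ?_)
    fun u hu v _ huv => lastTouch_inj (h0 (mem_filter.1 hu).2) huv).trans (by omega)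
  have hv := (mem_filter.1 hv).2
  have h1 := lt_promotionTime_of_levelOf_lt (h0 hv) (hv ▸ (by omega : 1 < 2)) hd2
  have h2 := promotionTime_le (s := s) (ℓ := 2) (by omega) (lastTouch F (t + 1) v)
  have h3 := lastTouch_le F (t + 1) v
  simp only [powSum, zero_add, pow_one] at h2
  rw [mem_Ico]
  omega

lemma card_inAgeWindow_le (ℓ : ℕ) :
    (univ.filter fun v : Fin N => InAgeWindow s ℓ t (lastTouch F (t + 1) v)).card ≤ s := by
  set k := (t + 1 - phaseStart s ℓ (t + 1)) * s + powSum s (ℓ - 2)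
  refine (card_le_of_injOn_Ico (lo := phaseStart s ℓ (t + 1) - k - s)
    (hi := phaseStart s ℓ (t + 1) - k) (fun v hv => ?_)
    fun u hu v _ huv => lastTouch_inj (mem_filter.1 hu).2.1 huv).trans (by omega)
  obtain ⟨-, h1, h2⟩ := (mem_filter.1 hv).2
  rw [Nat.add_one_mul] at h2
  rw [mem_Ico]
  omega

lemma card_inIndexWindow_le :
    (univ.filter fun v : Fin N => InIndexWindow s d t v).card ≤ s := by
  refine (card_le_of_injOn_Ico (f := fun v : Fin N => (v : ℕ))
    (lo := (t + 1 - phaseStart s d (t + 1)) * s) (hi := (t + 1 - phaseStart s d (t + 1) + 1) * s)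
    (fun v hv => mem_Ico.2 (mem_filter.1 hv).2) fun u _ v _ huv => Fin.ext huv).trans ?_
  rw [Nat.add_one_mul, Nat.add_sub_cancel_left]

lemma changed_subset (hs : 1 ≤ s) (hd : 1 ≤ d) (hNs : N ≤ s ^ d) :
    univ.filter (fun v => bigBucketColoring d s F t v ≠ bigBucketColoring d s F (t + 1) v) ⊆
      (univ.filter (fun v : Fin N => levelOf d s (t + 1) (lastTouch F (t + 1) v) = 1) ∪
        (Icc 2 d).biUnion fun ℓ =>
          univ.filter fun v : Fin N => InAgeWindow s ℓ t (lastTouch F (t + 1) v)) ∪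
      univ.filter (fun v : Fin N => InIndexWindow s d t v) := by
  intro v hv
  by_contra hnot
  simp only [mem_union, mem_filter, mem_biUnion, mem_univ, true_and, mem_Icc, not_or,
    not_exists, not_and] at hv hnot
  obtain ⟨⟨hL1, hXT⟩, hXV⟩ := hnot
  have htouch : ¬ IsTouched F (t + 1) v := fun h => by
    rw [lastTouch_succ_of_isTouched h, levelOf_self hs hd (Nat.succ_pos t)] at hL1
    exact hL1 rfl
  have hT := lastTouch_succ_of_not_isTouched htouch
  have hℓ := one_le_levelOf (s := s) hd (lastTouch_le F (t + 1) v)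
  have hℓd := levelOf_le d s (t + 1) (lastTouch F (t + 1) v)
  have hXT' := hXT _ ⟨by omega, hℓd⟩
  rw [hT] at hL1 hXT'
  have hb := bucket_succ_eq hs hd (v.isLt.trans_le hNs) (lastTouch_le F t v) hL1 hXT' hXV
  apply hv
  simp only [bigBucketColoring, vertexBucket, hT, hb]

theorem recount_bigBucketColoring_le (hs : 1 ≤ s) (hd : 1 ≤ d) (hNs : N ≤ s ^ d) :
    recount (bigBucketColoring d s F t) (bigBucketColoring d s F (t + 1)) ≤ (d + 1) * s := by
  unfold recount
  refine (card_le_card (changed_subset hs hd hNs)).trans ?_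
  refine (card_union_le _ _).trans (Nat.add_le_add_right (card_union_le _ _) _ |>.trans ?_)
  have hA := card_levelOf_eq_one_le (F := F) (t := t) hs hd hNs
  have hB := card_biUnion_le.trans (sum_le_sum fun ℓ (_ : ℓ ∈ Icc 2 d) =>
    card_inAgeWindow_le (F := F) (s := s) (t := t) ℓ)
  have hC := card_inIndexWindow_le (N := N) (s := s) (d := d) (t := t)
  rw [sum_const, Nat.card_Icc, smul_eq_mul] at hB
  have : s + (d + 1 - 2) * s + s = (d + 1) * s := by
    obtain ⟨k, rfl⟩ := Nat.exists_eq_add_of_le' hd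
    rw [show k + 1 + 1 - 2 = k by omega]
    ring
  omega

end Recount

lemma one_le_ceil_rpow {N : ℕ} (hN : 1 ≤ N) (x : ℝ) : 1 ≤ ⌈(N : ℝ) ^ x⌉₊ :=
  Nat.one_le_ceil_iff.2 (Real.rpow_pos_of_pos (by exact_mod_cast hN) x)

lemma le_ceil_rpow_one_div_pow (N : ℕ) {d : ℕ} (hd : d ≠ 0) :
    N ≤ ⌈(N : ℝ) ^ ((1 : ℝ) / d)⌉₊ ^ d := by
  have h := pow_le_pow_left₀ (by positivity) (Nat.le_ceil ((N : ℝ) ^ ((1 : ℝ) / d))) d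
  have hroot : ((N : ℝ) ^ ((1 : ℝ) / d)) ^ d = N := by
    rw [one_div, Real.rpow_inv_natCast_pow (Nat.cast_nonneg N) hd]
  rw [hroot] at h
  exact_mod_cast h

/-- The recoloring algorithm reads the current time and graph history off the list of graphs. -/
noncomputable def bigBucketAlgorithm {N : ℕ} (d s : ℕ) (L : List (SimpleGraph (Fin N))) :
    Fin N → ℕ :=
  bigBucketColoring d s (fun i => L.getD i ⊥) (L.length - 1)

lemma bigBucketAlgorithm_range {N : ℕ} (d s : ℕ) (G : ℕ → SimpleGraph (Fin N)) (t : ℕ) :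
    bigBucketAlgorithm d s ((List.range (t + 1)).map G) = bigBucketColoring d s G t := by
  rw [bigBucketAlgorithm, List.length_map, List.length_range, Nat.add_sub_cancel]
  exact bigBucketColoring_congr fun τ hτ => by simp [Nat.lt_succ_of_le hτ]

end BigBuckets

/-- The de-amortized big-buckets algorithm: an `O(d)`-competitive recoloring algorithm
with at most `(d+1)·⌈N^{1/d}⌉` recolorings per update in the worst case. -/
theorem bigBuckets_deamortized (d N : ℕ) (hd : 1 ≤ d) (hN : 1 ≤ N) :
    ∃ A : List (SimpleGraph (Fin N)) → (Fin N → ℕ),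
      ∀ (m : ℕ) (G : ℕ → SimpleGraph (Fin N)),
        G 0 = ⊥ → (∀ t < m, isStep (G t) (G (t + 1))) →
        (∀ t ≤ m, IsProperNat (G t) (A ((List.range (t + 1)).map G))) ∧
        (∀ t ≤ m, ∀ v : Fin N,
          1 ≤ A ((List.range (t + 1)).map G) v ∧
          A ((List.range (t + 1)).map G) v ≤
            2 * (d + 1) *
              ((Finset.range (m + 1)).sup fun t => ((G t).chromaticNumber).toNat)) ∧
        (∀ t < m,
          recount (A ((List.range (t + 1)).map G)) (A ((List.range (t + 2)).map G))
            ≤ (d + 1) * ⌈(N : ℝ) ^ ((1 : ℝ) / d)⌉₊) := by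
  set s := ⌈(N : ℝ) ^ ((1 : ℝ) / d)⌉₊
  have hs : 1 ≤ s := BigBuckets.one_le_ceil_rpow hN _
  have hNs : N ≤ s ^ d := BigBuckets.le_ceil_rpow_one_div_pow N (by omega)
  refine ⟨BigBuckets.bigBucketAlgorithm d s, fun m G _ hsteps =>
    ⟨fun t ht => ?_, fun t ht v => ?_, fun t _ => ?_⟩⟩
  · rw [BigBuckets.bigBucketAlgorithm_range]
    exact BigBuckets.bigBucketColoring_isProper hs hd hNs fun τ hτ => hsteps τ (by omega)
  · set C := (Finset.range (m + 1)).sup fun t => (G t).chromaticNumber.toNat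
    have hC (τ : ℕ) (hτ : τ ≤ t) : (G τ).chromaticNumber.toNat ≤ C :=
      Finset.le_sup (f := fun t => (G t).chromaticNumber.toNat) (Finset.mem_range.2 (by omega))
    rw [BigBuckets.bigBucketAlgorithm_range]
    exact ⟨BigBuckets.one_le_bigBucketColoring v,
      (BigBuckets.bigBucketColoring_le hs hd hNs v hC).trans (Nat.mul_le_mul_right C (by omega))⟩
  · rw [BigBuckets.bigBucketAlgorithm_range, BigBuckets.bigBucketAlgorithm_range d s G (t + 1)]
    exact BigBuckets.recount_bigBucketColoring_le hs hd hNs
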